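/- Truthfulness adjustment in the uniform price auction: for any fixed adversary bid vector β ∈ [0,1]^K (non-increasing) and any non-increasing bid vector b, the modified bid vector b̃ with b̃_1 = v_1 and b̃_k = min(b_k, v_k) for k ≥ 2 satisfies u(b̃, β) ≥ u(b, β), where u is the uniform-price utility with marginal valuations v_1 ≥ ... ≥ v_K. In particular, capping each bid component at the corresponding valuation never decreases the pointwise utility. -/

import Mathlib

open scoped Classical

/-- Allocation in the K-item standard auction. -/
noncomputable def alloc (K : ℕ) (b β : ℕ → ℝ) : ℕ :=
  Nat.findGreatest (fun k => ∀ j, 1 ≤ j → j ≤ k → β (K + 1 - j) ≤ b j) K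

/-- Uniform price: the (K+1)-th highest bid overall. -/
noncomputable def price (K : ℕ) (b β : ℕ → ℝ) : ℝ :=
  max (b (alloc K b β + 1)) (β (K - alloc K b β + 1))

/-- Uniform-price utility. -/
noncomputable def util (K : ℕ) (v b β : ℕ → ℝ) : ℝ :=
  ∑ l ∈ Finset.Icc 1 (alloc K b β), (v l - price K b β)

/-!
Let `x` and `x'` be the numbers of items won with `b` and with the capped bids `b'`. No bid of
`b'` exceeds its value, so `b'` earns nonnegative utility, which settles `x = 0`. Capping lowers
every bid but the first, so `x' ≤ x` once `x ≥ 1`. If `x' < x`, the capped bid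
`min (b (x'+1)) (v (x'+1))` loses to `β (K - x')` while `b (x'+1)` beats it, hence
`v (x'+1) < β (K - x') ≤ price b`: the items given up had negative marginal utility. On the items
kept the price can only drop: it is at most `β (K - x')` if `x' < x`, and if `x' = x` it drops
with `b' (x+1) ≤ b (x+1)`.
-/

noncomputable def capBids (K : ℕ) (v b : ℕ → ℝ) : ℕ → ℝ :=
  fun k => if k = 1 then v 1 else if k ≤ K then min (b k) (v k) else 0

section Alloc

variable {K : ℕ} {b b' β : ℕ → ℝ}

lemma alloc_le : alloc K b β ≤ K :=
  @Nat.findGreatest_le (fun k => ∀ j, 1 ≤ j → j ≤ k → β (K + 1 - j) ≤ b j)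
    (fun _ => Classical.propDecidable _) K

lemma le_bid_of_le_alloc {j : ℕ} (hj : 1 ≤ j) (hjx : j ≤ alloc K b β) :
    β (K + 1 - j) ≤ b j :=
  @Nat.findGreatest_spec 0 (fun k => ∀ j, 1 ≤ j → j ≤ k → β (K + 1 - j) ≤ b j)
    (fun _ => Classical.propDecidable _) K (Nat.zero_le K)
    (fun j hj1 hj0 => absurd (hj1.trans hj0) (by omega)) j hj hjx

lemma le_bid_succ_of_lt_alloc {m : ℕ} (hm : m < alloc K b β) : β (K - m) ≤ b (m + 1) := by
  simpa using le_bid_of_le_alloc (K := K) (b := b) (β := β) (Nat.le_add_left 1 m) hm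

lemma bid_alloc_succ_lt (h : alloc K b β < K) : b (alloc K b β + 1) < β (K - alloc K b β) := by
  have hfail : ¬ ∀ j, 1 ≤ j → j ≤ alloc K b β + 1 → β (K + 1 - j) ≤ b j :=
    @Nat.findGreatest_is_greatest _ (fun k => ∀ j, 1 ≤ j → j ≤ k → β (K + 1 - j) ≤ b j)
      (fun _ => Classical.propDecidable _) K (Nat.lt_succ_self _) h
  push Not at hfail
  obtain ⟨j, hj1, hjx, hlt⟩ := hfail
  obtain hj | rfl := Nat.le_succ_iff.mp hjx
  · exact absurd (le_bid_of_le_alloc hj1 hj) hlt.not_ge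
  · simpa using hlt

lemma alloc_le_alloc_of_bid_succ_le (h : b' (alloc K b β + 1) ≤ b (alloc K b β + 1)) :
    alloc K b' β ≤ alloc K b β := by
  by_contra! hlt
  have hwin := le_bid_succ_of_lt_alloc hlt
  have hlose := bid_alloc_succ_lt (hlt.trans_le alloc_le)
  linarith

end Alloc

section Price

variable {K : ℕ} {v b b' β : ℕ → ℝ}

lemma price_le_val_alloc (hv : AntitoneOn v (Set.Icc 1 K)) (hvK : 0 ≤ v K)
    (hbv : ∀ l, 1 ≤ l → l ≤ K → b l ≤ v l) (hbK : b (K + 1) = 0)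
    (hx : 1 ≤ alloc K b β) :
    price K b β ≤ v (alloc K b β) := by
  have hxK : alloc K b β ≤ K := alloc_le
  apply max_le
  · rcases hxK.lt_or_eq with hlt | heq
    · exact (hbv _ (by omega) hlt).trans (hv ⟨hx, hxK⟩ ⟨by omega, hlt⟩ (Nat.le_succ _))
    · rw [heq, hbK]
      exact hvK
  · calc β (K - alloc K b β + 1) = β (K + 1 - alloc K b β) := by congr 1; omega
      _ ≤ b (alloc K b β) := le_bid_of_le_alloc hx le_rfl
      _ ≤ v (alloc K b β) := hbv _ hx hxK

lemma util_nonneg_of_bid_le_val (hv : AntitoneOn v (Set.Icc 1 K)) (hvK : 0 ≤ v K)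
    (hbv : ∀ l, 1 ≤ l → l ≤ K → b l ≤ v l) (hbK : b (K + 1) = 0) :
    0 ≤ util K v b β := by
  refine Finset.sum_nonneg fun l hl => ?_
  obtain ⟨hl1, hlx⟩ := Finset.mem_Icc.mp hl
  have hp := price_le_val_alloc hv hvK hbv hbK (hl1.trans hlx)
  have hvl := hv ⟨hl1, hlx.trans alloc_le⟩ ⟨hl1.trans hlx, alloc_le⟩ hlx
  linarith

lemma le_price_of_lt_alloc (hβ : AntitoneOn β (Set.Icc 1 K)) {m : ℕ} (hm : m < alloc K b β) :
    β (K - m) ≤ price K b β := by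
  have hxK : alloc K b β ≤ K := alloc_le
  exact (hβ ⟨by omega, by omega⟩ ⟨by omega, by omega⟩ (by omega)).trans (le_max_right _ _)

lemma price_le_price_of_alloc_le (hβ : AntitoneOn β (Set.Icc 1 K))
    (h1 : 1 ≤ alloc K b' β) (hle : alloc K b' β ≤ alloc K b β)
    (hsucc : b' (alloc K b' β + 1) ≤ b (alloc K b' β + 1)) :
    price K b' β ≤ price K b β := by
  rcases hle.lt_or_eq with hlt | heq
  · have hx'K : alloc K b' β < K := hlt.trans_le alloc_le
    have hβ' : β (K - alloc K b' β + 1) ≤ β (K - alloc K b' β) :=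
      hβ ⟨by omega, by omega⟩ ⟨by omega, by omega⟩ (Nat.le_succ _)
    exact max_le ((bid_alloc_succ_lt hx'K).le.trans (le_price_of_lt_alloc hβ hlt))
      (hβ'.trans (le_price_of_lt_alloc hβ hlt))
  · unfold price
    rw [← heq]
    exact max_le_max hsucc le_rfl

end Price

lemma sum_Icc_sub_le_of_le {v : ℕ → ℝ} {p : ℝ} {m n : ℕ} (hmn : m ≤ n)
    (htail : ∀ l, m < l → l ≤ n → v l ≤ p) :
    ∑ l ∈ Finset.Icc 1 n, (v l - p) ≤ ∑ l ∈ Finset.Icc 1 m, (v l - p) := by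
  rw [← Finset.sum_sdiff (Finset.Icc_subset_Icc_right hmn)]
  refine add_le_of_nonpos_left (Finset.sum_nonpos fun l hl => ?_)
  simp only [Finset.mem_sdiff, Finset.mem_Icc, not_and, not_le] at hl
  have := htail l (hl.2 hl.1.1) hl.1.2
  linarith

section CapBids

variable {K : ℕ} {v b β : ℕ → ℝ}

lemma capBids_le_val {l : ℕ} (hlK : l ≤ K) : capBids K v b l ≤ v l := by
  unfold capBids
  split_ifs <;> simp_all

lemma min_le_capBids {l : ℕ} (hlK : l ≤ K) : min (b l) (v l) ≤ capBids K v b l := by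
  unfold capBids
  split_ifs with h1
  · subst h1
    exact min_le_right _ _
  · exact le_rfl

lemma capBids_le_bid (hbK : b (K + 1) = 0) {l : ℕ} (hl : 2 ≤ l)
    (hlK : l ≤ K + 1) : capBids K v b l ≤ b l := by
  unfold capBids
  split_ifs with h1 h2
  · omega
  · exact min_le_left _ _
  · rw [show l = K + 1 by omega, hbK]

lemma val_succ_lt_of_alloc_capBids_lt (h : alloc K (capBids K v b) β < alloc K b β) :
    v (alloc K (capBids K v b) β + 1) < β (K - alloc K (capBids K v b) β) := by
  have hlose := bid_alloc_succ_lt (h.trans_le alloc_le)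
  have hwin := le_bid_succ_of_lt_alloc h
  have hcap := min_le_capBids (v := v) (b := b) (h.trans_le alloc_le)
  rcases min_lt_iff.mp (hcap.trans_lt hlose) with hb | hv
  · exact absurd hwin hb.not_ge
  · exact hv

end CapBids

theorem uniform_cap_bids_pointwise_general (K : ℕ) (v b β : ℕ → ℝ)
    (hK : 1 ≤ K)
    (hv : ∀ i j, 1 ≤ i → i ≤ j → j ≤ K → v j ≤ v i)
    (hv01 : ∀ i, 1 ≤ i → i ≤ K → v i ∈ Set.Icc (0:ℝ) 1)
    (hβ : ∀ i j, 1 ≤ i → i ≤ j → j ≤ K → β j ≤ β i)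
    (hbK1 : b (K + 1) = 0) :
    util K v b β
      ≤ util K v (fun k => if k = 1 then v 1 else if k ≤ K then min (b k) (v k) else 0) β := by
  change util K v b β ≤ util K v (capBids K v b) β
  have hvA : AntitoneOn v (Set.Icc 1 K) := fun i hi j hj hij => hv i j hi.1 hij hj.2
  have hβA : AntitoneOn β (Set.Icc 1 K) := fun i hi j hj hij => hβ i j hi.1 hij hj.2
  rcases Nat.eq_zero_or_pos (alloc K b β) with hx0 | hx1
  · have hb'K : capBids K v b (K + 1) = 0 := by
      unfold capBids
      rw [if_neg (by omega), if_neg (by omega)]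
    calc util K v b β = 0 := by simp [util, hx0]
      _ ≤ util K v (capBids K v b) β :=
        util_nonneg_of_bid_le_val hvA (hv01 K hK le_rfl).1 (fun _ _ => capBids_le_val) hb'K
  set x := alloc K b β
  set x' := alloc K (capBids K v b) β
  have hxK : x ≤ K := alloc_le
  have hx'x : x' ≤ x := alloc_le_alloc_of_bid_succ_le (capBids_le_bid hbK1 (by omega) (by omega))
  have htail : ∀ l, x' < l → l ≤ x → v l ≤ price K b β := fun l hl hlx =>
    calc v l ≤ v (x' + 1) := hvA ⟨by omega, by omega⟩ ⟨by omega, by omega⟩ hl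
      _ ≤ β (K - x') := (val_succ_lt_of_alloc_capBids_lt (hl.trans_le hlx)).le
      _ ≤ price K b β := le_price_of_lt_alloc hβA (hl.trans_le hlx)
  calc util K v b β ≤ ∑ l ∈ Finset.Icc 1 x', (v l - price K b β) :=
        sum_Icc_sub_le_of_le hx'x htail
    _ ≤ util K v (capBids K v b) β := Finset.sum_le_sum fun l hl => by
      have hx'1 : 1 ≤ x' := (Finset.mem_Icc.mp hl).1.trans (Finset.mem_Icc.mp hl).2
      have := price_le_price_of_alloc_le hβA hx'1 hx'x
        (capBids_le_bid hbK1 (by omega) (by omega))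
      linarith

/-- Truthfulness adjustment: replacing the first bid by `v 1` and capping every other
bid at the corresponding valuation never decreases the pointwise uniform-price utility. -/
theorem uniform_cap_bids_pointwise (K : ℕ) (v b β : ℕ → ℝ)
    (hK : 1 ≤ K)
    (hv : ∀ i j, 1 ≤ i → i ≤ j → j ≤ K → v j ≤ v i)
    (hv01 : ∀ i, 1 ≤ i → i ≤ K → v i ∈ Set.Icc (0:ℝ) 1)
    (hb : ∀ i j, 1 ≤ i → i ≤ j → j ≤ K → b j ≤ b i)
    (hb01 : ∀ i, 1 ≤ i → i ≤ K → b i ∈ Set.Icc (0:ℝ) 1)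
    (hβ : ∀ i j, 1 ≤ i → i ≤ j → j ≤ K → β j ≤ β i)
    (hβ01 : ∀ i, 1 ≤ i → i ≤ K → β i ∈ Set.Icc (0:ℝ) 1)
    (hbK1 : b (K + 1) = 0) :
    util K v b β
      ≤ util K v (fun k => if k = 1 then v 1 else if k ≤ K then min (b k) (v k) else 0) β :=
  uniform_cap_bids_pointwise_general K v b β hK hv hv01 hβ hbK1
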